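/- Let α₁(t) = −1 + e^{2πit} and α₂(t) = 1 − e^{2πit}, t ∈ [0,1], be loops in ℂ \ {−1,1} based at 0. Fix n ∈ ℤ \ {0} and k ∈ ℤ. Then: (1) the unique lift of the loop α₁ⁿ (the loop traversing α₁ n times if n > 0, and traversing the reverse of α₁ |n| times if n < 0) under the covering map f = f₁ ∘ f₂ with initial point −i/2 + ik has terminal point −i/2 + i(k+n) and image contained in the closed left half-plane {z : Re z ≤ 0}; (2) the unique lift of α₂ⁿ with initial point i/2 + ik has terminal point i/2 + i(k−n) and image contained in the closed right half-plane {z : Re z ≥ 0}. -/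

import Mathlib

open Complex unitInterval

/-- The set `iℤ = {i·m : m ∈ ℤ}` of integer multiples of `i`. -/
def intMulI : Set ℂ := {z : ℂ | ∃ m : ℤ, z = Complex.I * (m : ℂ)}

/-- `f₂(z) = (e^{πz} − 1)/(e^{πz} + 1)`. -/
noncomputable def fTwo (z : ℂ) : ℂ :=
  (Complex.exp (Real.pi * z) - 1) / (Complex.exp (Real.pi * z) + 1)

/-- `f₁(w) = (1/2)(w + 1/w)`. -/
noncomputable def fOne (w : ℂ) : ℂ := (w + w⁻¹) / 2

/-- The covering map `f = f₁ ∘ f₂` from `ℂ \ iℤ` onto `ℂ \ {−1,1}`. -/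
noncomputable def fCov (z : ℂ) : ℂ := fOne (fTwo z)

/-- The loop `α₁ⁿ(t) = −1 + e^{2πint}`, traversing `α₁` `n` times (the reverse of `α₁`
`|n|` times if `n < 0`). -/
noncomputable def alphaOnePow (n : ℤ) (t : ℝ) : ℂ :=
  -1 + Complex.exp (2 * Real.pi * Complex.I * (n : ℂ) * t)

/-- The loop `α₂ⁿ(t) = 1 − e^{2πint}`, traversing `α₂` `n` times (the reverse of `α₂`
`|n|` times if `n < 0`). -/
noncomputable def alphaTwoPow (n : ℤ) (t : ℝ) : ℂ :=
  1 - Complex.exp (2 * Real.pi * Complex.I * (n : ℂ) * t)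

/-!
On `ℂ \ iℤ` the map `f` is `z ↦ coth (π z) = cayley (exp (2π z))` with `cayley w = (w + 1)/(w - 1)`,
an involution off `w = 1`. A lift of a path `p` avoiding `1` is therefore a continuous choice of
`(2π)⁻¹ log (cayley ∘ p)`, and is unique because `exp` is a covering map. For
`p = α₁ⁿ = -1 + q` with `q = exp (2πint)` we have `cayley p = -q / (2 - q)`, and since
`Re (2 - q) ≥ 1` the principal logarithm of `2 - q` gives the explicit lift
`i (k + nt - 1/2) - log (2 - q) / 2π`, whose real part `-log ‖2 - q‖ / 2π` is `≤ 0`.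
Finally `f` is odd and `α₂ⁿ = -α₁ⁿ`, so `z ↦ -z` turns lifts of `α₁ⁿ` into lifts of `α₂ⁿ`.
-/

open Real

noncomputable def cayley (w : ℂ) : ℂ := (w + 1) / (w - 1)

lemma cayley_ne_one (w : ℂ) : cayley w ≠ 1 := by
  rcases eq_or_ne w 1 with rfl | hw
  · norm_num [cayley]
  · rw [cayley, Ne, div_eq_one_iff_eq (sub_ne_zero.2 hw)]
    intro h
    exact two_ne_zero (by linear_combination h : (2 : ℂ) = 0)

lemma cayley_cayley {w : ℂ} (hw : w ≠ 1) : cayley (cayley w) = w := by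
  have : w - 1 ≠ 0 := sub_ne_zero.2 hw
  unfold cayley
  field_simp
  ring

lemma cayley_inv {w : ℂ} (hw : w ≠ 0) : cayley w⁻¹ = -cayley w := by
  rcases eq_or_ne w 1 with rfl | h1
  · norm_num [cayley]
  have : w - 1 ≠ 0 := sub_ne_zero.2 h1
  have : 1 - w ≠ 0 := sub_ne_zero.2 h1.symm
  unfold cayley
  field_simp
  ring

lemma fOne_sub_one_div_add_one (w : ℂ) : fOne ((w - 1) / (w + 1)) = cayley (w ^ 2) := by
  rcases eq_or_ne w 1 with rfl | h1
  · norm_num [fOne, cayley]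
  rcases eq_or_ne w (-1) with rfl | h2
  · norm_num [fOne, cayley]
  have : w - 1 ≠ 0 := sub_ne_zero.2 h1
  have : w + 1 ≠ 0 := by rwa [← sub_neg_eq_add, sub_ne_zero]
  have : w ^ 2 - 1 ≠ 0 := by
    rw [show w ^ 2 - 1 = (w - 1) * (w + 1) by ring]
    exact mul_ne_zero ‹_› ‹_›
  unfold fOne cayley
  field_simp
  ring

lemma fCov_eq_cayley (z : ℂ) : fCov z = cayley (exp (2 * π * z)) := by
  rw [fCov, fTwo, fOne_sub_one_div_add_one, ← Complex.exp_nat_mul]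
  ring_nf

lemma two_mul_ofReal_pi_ne_zero : 2 * (π : ℂ) ≠ 0 := by exact_mod_cast Real.two_pi_pos.ne'

lemma exp_two_pi_mul_eq_one_iff {z : ℂ} : exp (2 * π * z) = 1 ↔ z ∈ intMulI := by
  rw [Complex.exp_eq_one_iff]
  refine exists_congr fun m => ?_
  rw [show (m : ℂ) * (2 * π * Complex.I) = 2 * π * (Complex.I * m) by ring]
  exact mul_right_inj' two_mul_ofReal_pi_ne_zero

lemma fCov_neg (z : ℂ) : fCov (-z) = -fCov z := by
  rw [fCov_eq_cayley, fCov_eq_cayley, mul_neg, Complex.exp_neg, cayley_inv (Complex.exp_ne_zero _)]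

lemma neg_mem_intMulI {z : ℂ} (hz : z ∈ intMulI) : -z ∈ intMulI := by
  obtain ⟨m, rfl⟩ := hz
  exact ⟨-m, by push_cast; ring⟩

lemma eq_of_fCov_comp_eq {X : Type*} [TopologicalSpace X] [PreconnectedSpace X]
    {γ γ' : X → ℂ} (hγ : Continuous γ) (hγ' : Continuous γ') (hI : ∀ x, γ x ∉ intMulI)
    (hI' : ∀ x, γ' x ∉ intMulI) (hf : ∀ x, fCov (γ x) = fCov (γ' x)) {x₀ : X}
    (h₀ : γ x₀ = γ' x₀) : γ = γ' := by
  have hexp : ∀ x, exp (2 * π * γ x) = exp (2 * π * γ' x) := fun x => by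
    have h := congrArg cayley (hf x)
    rwa [fCov_eq_cayley, fCov_eq_cayley, cayley_cayley (mt exp_two_pi_mul_eq_one_iff.1 (hI x)),
      cayley_cayley (mt exp_two_pi_mul_eq_one_iff.1 (hI' x))] at h
  have h := Complex.isCoveringMap_exp.eq_of_comp_eq (g₁ := fun x => 2 * π * γ x)
    (g₂ := fun x => 2 * π * γ' x) (by fun_prop) (by fun_prop)
    (funext fun x => Subtype.ext (hexp x)) x₀ (by simp only [h₀])
  funext x
  exact mul_left_cancel₀ two_mul_ofReal_pi_ne_zero (congrFun h x)

def IsLiftOf (p : ℝ → ℂ) (z₀ : ℂ) (γ : I → ℂ) : Prop :=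
  Continuous γ ∧ (∀ t, γ t ∉ intMulI) ∧ (∀ t : I, fCov (γ t) = p t) ∧ γ 0 = z₀

lemma IsLiftOf.unique {p : ℝ → ℂ} {z₀ : ℂ} {γ γ' : I → ℂ} (h : IsLiftOf p z₀ γ)
    (h' : IsLiftOf p z₀ γ') : γ = γ' :=
  eq_of_fCov_comp_eq h.1 h'.1 h.2.1 h'.2.1 (fun t => (h.2.2.1 t).trans (h'.2.2.1 t).symm)
    (h.2.2.2.trans h'.2.2.2.symm)

lemma IsLiftOf.neg {p : ℝ → ℂ} {z₀ : ℂ} {γ : I → ℂ} (h : IsLiftOf p z₀ γ) :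
    IsLiftOf (-p) (-z₀) (-γ) :=
  ⟨h.1.neg, fun t hm => h.2.1 t (by simpa using neg_mem_intMulI hm),
    fun t => by simp [fCov_neg, h.2.2.1 t], by simp [h.2.2.2]⟩

lemma norm_exp_two_pi_I_mul (n : ℤ) (t : ℝ) : ‖exp (2 * π * Complex.I * n * t)‖ = 1 := by
  rw [show 2 * π * Complex.I * n * t = ((2 * π * n * t : ℝ) : ℂ) * Complex.I by push_cast; ring]
  exact norm_exp_ofReal_mul_I _

lemma one_le_re_two_sub {q : ℂ} (hq : ‖q‖ ≤ 1) : 1 ≤ (2 - q).re := by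
  have := re_le_norm q
  rw [sub_re, re_ofNat]
  linarith

noncomputable def liftOne (n k : ℤ) (t : I) : ℂ :=
  Complex.I * (k + n * t - 1 / 2) - log (2 - exp (2 * π * Complex.I * n * t)) / (2 * π)

section liftOne

variable (n k : ℤ)

lemma one_le_re_two_sub_exp (t : ℝ) : 1 ≤ (2 - exp (2 * π * Complex.I * n * t)).re :=
  one_le_re_two_sub (norm_exp_two_pi_I_mul n t).le

lemma exp_two_pi_I_mul_ne_two (t : ℝ) : exp (2 * π * Complex.I * n * t) ≠ 2 := fun h => by
  have := one_le_re_two_sub_exp n t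
  rw [h] at this
  norm_num at this

lemma continuous_liftOne : Continuous (liftOne n k) := by
  have hlog : Continuous fun t : I => log (2 - exp (2 * π * Complex.I * n * t)) :=
    (by fun_prop : Continuous fun t : I => 2 - exp (2 * π * Complex.I * n * t)).clog
      fun t => Or.inl (by linarith [one_le_re_two_sub_exp n t])
  unfold liftOne
  fun_prop

lemma exp_two_pi_mul_liftOne (t : I) :
    exp (2 * π * liftOne n k t) = cayley (alphaOnePow n t) := by
  have h2q := sub_ne_zero.2 (exp_two_pi_I_mul_ne_two n t).symm
  rw [alphaOnePow, cayley]
  set q := exp (2 * π * Complex.I * n * t)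
  have hq2 : -1 + q - 1 ≠ 0 := fun h => h2q (by linear_combination -h)
  have hsplit : 2 * π * liftOne n k t
      = k * (2 * π * Complex.I) - π * Complex.I + 2 * π * Complex.I * n * t - log (2 - q) := by
    unfold liftOne
    field_simp
    ring
  rw [hsplit, Complex.exp_sub, Complex.exp_add, Complex.exp_sub, exp_int_mul_two_pi_mul_I,
    exp_pi_mul_I, exp_log h2q]
  field_simp
  ring

lemma alphaOnePow_ne_one (t : ℝ) : alphaOnePow n t ≠ 1 := fun h =>
  exp_two_pi_I_mul_ne_two n t (by unfold alphaOnePow at h; linear_combination h)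

lemma isLiftOf_liftOne :
    IsLiftOf (alphaOnePow n) (-Complex.I / 2 + Complex.I * k) (liftOne n k) := by
  refine ⟨continuous_liftOne n k, fun t => ?_, fun t => ?_, ?_⟩
  · rw [← exp_two_pi_mul_eq_one_iff, exp_two_pi_mul_liftOne]
    exact cayley_ne_one _
  · rw [fCov_eq_cayley, exp_two_pi_mul_liftOne, cayley_cayley (alphaOnePow_ne_one n t)]
  · norm_num [liftOne]
    ring

lemma liftOne_one : liftOne n k 1 = -Complex.I / 2 + Complex.I * (k + n) := by
  have : exp (2 * π * Complex.I * n) = 1 := by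
    rw [show 2 * π * Complex.I * n = n * (2 * π * Complex.I) by ring, exp_int_mul_two_pi_mul_I]
  norm_num [liftOne, this]
  ring

lemma re_liftOne_nonpos (t : I) : (liftOne n k t).re ≤ 0 := by
  have h : 0 ≤ Real.log ‖2 - exp (2 * π * Complex.I * n * t)‖ :=
    Real.log_nonneg ((one_le_re_two_sub_exp n t).trans (re_le_norm _))
  have : (liftOne n k t).re = -(Real.log ‖2 - exp (2 * π * Complex.I * n * t)‖ / (2 * π)) := by
    simp [liftOne, log_re, ← ofReal_ofNat, ← ofReal_mul]
  rw [this, neg_nonpos]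
  positivity

end liftOne

lemma exists_unique_lift_alphaOnePow (n k : ℤ) :
    ∃ γ, IsLiftOf (alphaOnePow n) (-Complex.I / 2 + Complex.I * k) γ ∧
      (∀ γ', IsLiftOf (alphaOnePow n) (-Complex.I / 2 + Complex.I * k) γ' → γ' = γ) ∧
      γ 1 = -Complex.I / 2 + Complex.I * (k + n) ∧ ∀ t, (γ t).re ≤ 0 :=
  ⟨liftOne n k, isLiftOf_liftOne n k, fun _ h => h.unique (isLiftOf_liftOne n k), liftOne_one n k,
    re_liftOne_nonpos n k⟩

lemma alphaTwoPow_eq_neg (n : ℤ) : alphaTwoPow n = -alphaOnePow n := by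
  funext t
  simp only [alphaTwoPow, alphaOnePow, Pi.neg_apply]
  ring

theorem lift_of_alpha_pow_general (n : ℤ) (k : ℤ) :
    (∃ γ : I → ℂ,
      (Continuous γ ∧ (∀ t : I, γ t ∉ intMulI) ∧
        (∀ t : I, fCov (γ t) = alphaOnePow n (t : ℝ)) ∧
        γ 0 = -Complex.I / 2 + Complex.I * (k : ℂ)) ∧
      (∀ γ' : I → ℂ,
        (Continuous γ' ∧ (∀ t : I, γ' t ∉ intMulI) ∧
          (∀ t : I, fCov (γ' t) = alphaOnePow n (t : ℝ)) ∧
          γ' 0 = -Complex.I / 2 + Complex.I * (k : ℂ)) → γ' = γ) ∧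
      γ 1 = -Complex.I / 2 + Complex.I * ((k : ℂ) + (n : ℂ)) ∧
      (∀ t : I, (γ t).re ≤ 0)) ∧
    (∃ γ : I → ℂ,
      (Continuous γ ∧ (∀ t : I, γ t ∉ intMulI) ∧
        (∀ t : I, fCov (γ t) = alphaTwoPow n (t : ℝ)) ∧
        γ 0 = Complex.I / 2 + Complex.I * (k : ℂ)) ∧
      (∀ γ' : I → ℂ,
        (Continuous γ' ∧ (∀ t : I, γ' t ∉ intMulI) ∧
          (∀ t : I, fCov (γ' t) = alphaTwoPow n (t : ℝ)) ∧
          γ' 0 = Complex.I / 2 + Complex.I * (k : ℂ)) → γ' = γ) ∧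
      γ 1 = Complex.I / 2 + Complex.I * ((k : ℂ) - (n : ℂ)) ∧
      (∀ t : I, 0 ≤ (γ t).re)) := by
  refine ⟨exists_unique_lift_alphaOnePow n k, ?_⟩
  obtain ⟨γ, hγ, hunique, hγ1, hre⟩ := exists_unique_lift_alphaOnePow n (-k)
  have hstart : Complex.I / 2 + Complex.I * k = -(-Complex.I / 2 + Complex.I * ↑(-k)) := by
    push_cast; ring
  rw [alphaTwoPow_eq_neg, hstart]
  refine ⟨-γ, hγ.neg, fun γ' hγ' => ?_, ?_, fun t => ?_⟩
  · simpa using congrArg Neg.neg (hunique (-γ') (by simpa using IsLiftOf.neg hγ'))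
  · rw [Pi.neg_apply, hγ1]; push_cast; ring
  · simpa using hre t

/-- For `n ∈ ℤ \ {0}` and `k ∈ ℤ`: (1) the unique lift of `α₁ⁿ` under `f = f₁ ∘ f₂` with
initial point `−i/2 + ik` has terminal point `−i/2 + i(k+n)` and image in the closed left
half-plane; (2) the unique lift of `α₂ⁿ` with initial point `i/2 + ik` has terminal point
`i/2 + i(k−n)` and image in the closed right half-plane. -/
theorem lift_of_alpha_pow (n : ℤ) (hn : n ≠ 0) (k : ℤ) :
    (∃ γ : I → ℂ,
      (Continuous γ ∧ (∀ t : I, γ t ∉ intMulI) ∧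
        (∀ t : I, fCov (γ t) = alphaOnePow n (t : ℝ)) ∧
        γ 0 = -Complex.I / 2 + Complex.I * (k : ℂ)) ∧
      (∀ γ' : I → ℂ,
        (Continuous γ' ∧ (∀ t : I, γ' t ∉ intMulI) ∧
          (∀ t : I, fCov (γ' t) = alphaOnePow n (t : ℝ)) ∧
          γ' 0 = -Complex.I / 2 + Complex.I * (k : ℂ)) → γ' = γ) ∧
      γ 1 = -Complex.I / 2 + Complex.I * ((k : ℂ) + (n : ℂ)) ∧
      (∀ t : I, (γ t).re ≤ 0)) ∧
    (∃ γ : I → ℂ,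
      (Continuous γ ∧ (∀ t : I, γ t ∉ intMulI) ∧
        (∀ t : I, fCov (γ t) = alphaTwoPow n (t : ℝ)) ∧
        γ 0 = Complex.I / 2 + Complex.I * (k : ℂ)) ∧
      (∀ γ' : I → ℂ,
        (Continuous γ' ∧ (∀ t : I, γ' t ∉ intMulI) ∧
          (∀ t : I, fCov (γ' t) = alphaTwoPow n (t : ℝ)) ∧
          γ' 0 = Complex.I / 2 + Complex.I * (k : ℂ)) → γ' = γ) ∧
      γ 1 = Complex.I / 2 + Complex.I * ((k : ℂ) - (n : ℂ)) ∧
      (∀ t : I, 0 ≤ (γ t).re)) :=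
  lift_of_alpha_pow_general n k
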